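/- Conditional Esakia lemma, first half: under the standing hypotheses on f, let 𝒪 be an up-directed family of open elements of D with f(⊥) ≤ sSup 𝒪. Then ■_f(sSup 𝒪) = sSup { ■_f(o) | o ∈ 𝒪 }. Moreover there exists an up-directed subfamily 𝒪' ⊆ 𝒪 such that sSup 𝒪' = sSup 𝒪, ■_f(o) is open in C for every o ∈ 𝒪', and sSup { ■_f(o) | o ∈ 𝒪' } = sSup { ■_f(o) | o ∈ 𝒪 }. (Proposition 4.11(1).) -/

import Mathlib

/-- An element is completely join-prime. -/
def CJPrime {C : Type*} [CompleteLattice C] (j : C) : Prop :=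
  j ≠ ⊥ ∧ ∀ S : Set C, j ≤ sSup S → ∃ s ∈ S, j ≤ s

/-- An element is completely meet-prime. -/
def CMPrime {C : Type*} [CompleteLattice C] (m : C) : Prop :=
  m ≠ ⊤ ∧ ∀ S : Set C, sInf S ≤ m → ∃ s ∈ S, s ≤ m

/-- ◇_f(u) = ⋁ { f j | j completely join-prime, j ≤ u }. -/
def diam {C D : Type*} [CompleteLattice C] [CompleteLattice D]
    (f : C → D) (u : C) : D :=
  sSup (f '' {j | CJPrime j ∧ j ≤ u})

/-- ■_f(v) = ⋁ { j | j completely join-prime, f j ≤ v }. -/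
def bsq {C D : Type*} [CompleteLattice C] [CompleteLattice D]
    (f : C → D) (v : D) : C :=
  sSup {j | CJPrime j ∧ f j ≤ v}

/-- □_g(u) = ⋀ { g m | m completely meet-prime, u ≤ m }. -/
def boxg {C D : Type*} [CompleteLattice C] [CompleteLattice D]
    (g : C → D) (u : C) : D :=
  sInf (g '' {m | CMPrime m ∧ u ≤ m})

/-- ◆_g(v) = ⋀ { m | m completely meet-prime, v ≤ g m }. -/
def bdiam {C D : Type*} [CompleteLattice C] [CompleteLattice D]
    (g : C → D) (v : D) : C :=
  sInf {m | CMPrime m ∧ v ≤ g m}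

/-- Every element is the sup of the completely join-primes below it. -/
def JoinPerfect (C : Type*) [CompleteLattice C] : Prop :=
  ∀ u : C, u = sSup {j | CJPrime j ∧ j ≤ u}

/-- Every element is the inf of the completely meet-primes above it. -/
def MeetPerfect (C : Type*) [CompleteLattice C] : Prop :=
  ∀ u : C, u = sInf {m | CMPrime m ∧ u ≤ m}

/-- `(C, e)` is a canonical extension of the bounded distributive lattice `A`. -/
structure IsCanonicalExtension {A C : Type*} [DistribLattice A] [BoundedOrder A]
    [CompleteLattice C] (e : A → C) : Prop where
  injective : Function.Injective e
  map_bot : e ⊥ = ⊥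
  map_top : e ⊤ = ⊤
  map_inf : ∀ a b : A, e (a ⊓ b) = e a ⊓ e b
  map_sup : ∀ a b : A, e (a ⊔ b) = e a ⊔ e b
  dense_joinOfMeets : ∀ u : C, ∃ 𝒮 : Set (Set A),
      u = sSup ((fun S => sInf (e '' S)) '' 𝒮)
  dense_meetOfJoins : ∀ u : C, ∃ 𝒮 : Set (Set A),
      u = sInf ((fun S => sSup (e '' S)) '' 𝒮)
  compact : ∀ S T : Set A, sInf (e '' S) ≤ sSup (e '' T) →
      ∃ F : Finset A, ↑F ⊆ S ∧ ∃ G : Finset A, ↑G ⊆ T ∧ F.inf id ≤ G.sup id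

/-- Closed elements of the canonical extension: meets of subsets of `e(A)`. -/
def ClosedElem {A C : Type*} [CompleteLattice C] (e : A → C) (x : C) : Prop :=
  ∃ S : Set A, x = sInf (e '' S)

/-- Open elements of the canonical extension: joins of subsets of `e(A)`. -/
def OpenElem {A C : Type*} [CompleteLattice C] (e : A → C) (x : C) : Prop :=
  ∃ S : Set A, x = sSup (e '' S)

/-- Nonempty downward-directed family. -/
def DownDir {C : Type*} [Preorder C] (𝒞 : Set C) : Prop :=
  𝒞.Nonempty ∧ ∀ x ∈ 𝒞, ∀ y ∈ 𝒞, ∃ z ∈ 𝒞, z ≤ x ∧ z ≤ y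

/-- Nonempty upward-directed family. -/
def UpDir {C : Type*} [Preorder C] (𝒪 : Set C) : Prop :=
  𝒪.Nonempty ∧ ∀ x ∈ 𝒪, ∀ y ∈ 𝒪, ∃ z ∈ 𝒪, x ≤ z ∧ y ≤ z

/-- `h` preserves down-directed meets of closed elements. -/
def ClosedEsakia {A C D : Type*} [CompleteLattice C] [CompleteLattice D]
    (e : A → C) (h : C → D) : Prop :=
  ∀ 𝒞 : Set C, DownDir 𝒞 → (∀ c ∈ 𝒞, ClosedElem e c) →
    h (sInf 𝒞) = sInf (h '' 𝒞)

/-- `h` preserves up-directed joins of open elements. -/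
def OpenEsakia {A C D : Type*} [CompleteLattice C] [CompleteLattice D]
    (e : A → C) (h : C → D) : Prop :=
  ∀ 𝒪 : Set C, UpDir 𝒪 → (∀ o ∈ 𝒪, OpenElem e o) →
    h (sSup 𝒪) = sSup (h '' 𝒪)


/-!
Let `j` be completely join-prime in `C`. Then `j` is closed, hence the down-directed meet of the
`eA a` above it, so by the closed Esakia property `f j` is the meet of the closed elements
`f (eA a)`, i.e. a meet of elements of `eB(B)`. If `f j` lies below an open element, compactness
of `D` yields a single `a` with `j ≤ eA a` and `f (eA a)` below a finite join of generators.
For an open `o` this shows that `■_f(o)` is the join of the `eA a` with `f (eA a) ≤ o`, and for an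
up-directed family of opens the finite join lies below one member, which gives the equality;
the required subfamily is then `𝒪` itself.
-/

section Directed

variable {D ι : Type*} [Preorder D]

theorem UpDir.exists_forall_le {𝒪 : Set D} (h𝒪 : UpDir 𝒪) (s : Finset ι) {g : ι → D}
    (hg : ∀ i ∈ s, ∃ o ∈ 𝒪, g i ≤ o) : ∃ o ∈ 𝒪, ∀ i ∈ s, g i ≤ o := by
  induction s using Finset.cons_induction with
  | empty =>
    obtain ⟨o, ho⟩ := h𝒪.1
    exact ⟨o, ho, by simp⟩
  | cons i s hi ih =>
    obtain ⟨o₁, ho₁, hi₁⟩ := hg i (Finset.mem_cons_self i s)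
    obtain ⟨o₂, ho₂, hs₂⟩ := ih fun k hk => hg k (Finset.mem_cons_of_mem hk)
    obtain ⟨o, ho, h₁, h₂⟩ := h𝒪.2 o₁ ho₁ o₂ ho₂
    refine ⟨o, ho, fun k hk => ?_⟩
    rcases Finset.mem_cons.1 hk with rfl | hk
    · exact hi₁.trans h₁
    · exact (hs₂ k hk).trans h₂

theorem DownDir.exists_forall_le {𝒞 : Set D} (h𝒞 : DownDir 𝒞) (s : Finset ι) {g : ι → D}
    (hg : ∀ i ∈ s, ∃ c ∈ 𝒞, c ≤ g i) : ∃ c ∈ 𝒞, ∀ i ∈ s, c ≤ g i :=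
  UpDir.exists_forall_le (D := Dᵒᵈ) h𝒞 s hg

theorem DownDir.image {C : Type*} [Preorder C] {𝒞 : Set C} (h𝒞 : DownDir 𝒞) {f : C → D}
    (hf : Monotone f) : DownDir (f '' 𝒞) := by
  refine ⟨h𝒞.1.image f, ?_⟩
  rintro _ ⟨x, hx, rfl⟩ _ ⟨y, hy, rfl⟩
  obtain ⟨z, hz, hzx, hzy⟩ := h𝒞.2 x hx y hy
  exact ⟨f z, Set.mem_image_of_mem f hz, hf hzx, hf hzy⟩

end Directed

namespace IsCanonicalExtension

variable {A C : Type*} [DistribLattice A] [BoundedOrder A] [CompleteLattice C] {e : A → C}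

def toBoundedLatticeHom (he : IsCanonicalExtension e) : BoundedLatticeHom A C where
  toFun := e
  map_sup' := he.map_sup
  map_inf' := he.map_inf
  map_top' := he.map_top
  map_bot' := he.map_bot

protected theorem monotone (he : IsCanonicalExtension e) : Monotone e :=
  OrderHomClass.mono he.toBoundedLatticeHom

theorem map_finset_inf (he : IsCanonicalExtension e) {ι : Type*} (s : Finset ι) (g : ι → A) :
    e (s.inf g) = s.inf (e ∘ g) :=
  _root_.map_finset_inf he.toBoundedLatticeHom s g

theorem map_finset_sup (he : IsCanonicalExtension e) {ι : Type*} (s : Finset ι) (g : ι → A) :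
    e (s.sup g) = s.sup (e ∘ g) :=
  _root_.map_finset_sup he.toBoundedLatticeHom s g

theorem closedElem_of_cjPrime (he : IsCanonicalExtension e) {j : C} (hj : CJPrime j) :
    ClosedElem e j := by
  obtain ⟨𝒮, h𝒮⟩ := he.dense_joinOfMeets j
  obtain ⟨_, ⟨S, hS, rfl⟩, hjS⟩ := hj.2 _ h𝒮.le
  exact ⟨S, le_antisymm hjS ((le_sSup (Set.mem_image_of_mem _ hS)).trans h𝒮.ge)⟩

theorem downDir_image_setOf_le (he : IsCanonicalExtension e) (x : C) :
    DownDir (e '' {a | x ≤ e a}) := by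
  refine ⟨⟨e ⊤, ⊤, by simp [he.map_top], rfl⟩, ?_⟩
  rintro _ ⟨a, ha, rfl⟩ _ ⟨b, hb, rfl⟩
  exact ⟨e (a ⊓ b), ⟨a ⊓ b, (le_inf ha hb).trans_eq (he.map_inf a b).symm, rfl⟩,
    he.monotone inf_le_left, he.monotone inf_le_right⟩

end IsCanonicalExtension

theorem ClosedElem.sInf_image_setOf_le {A C : Type*} [CompleteLattice C] {e : A → C} {x : C}
    (hx : ClosedElem e x) : sInf (e '' {a | x ≤ e a}) = x := by
  obtain ⟨S, rfl⟩ := hx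
  refine le_antisymm (sInf_le_sInf (Set.image_mono fun a ha => sInf_le ⟨a, ha, rfl⟩)) ?_
  exact le_sInf (by rintro _ ⟨a, ha, rfl⟩; exact ha)

theorem sSup_le_sSup_image_setOf_le {B D : Type*} [CompleteLattice D] {e : B → D} {𝒪 : Set D}
    (h𝒪 : ∀ o ∈ 𝒪, OpenElem e o) : sSup 𝒪 ≤ sSup (e '' {b | ∃ o ∈ 𝒪, e b ≤ o}) := by
  refine sSup_le fun o ho => ?_
  obtain ⟨U, rfl⟩ := h𝒪 o ho
  exact sSup_le_sSup (Set.image_mono fun b hb => ⟨_, ho, le_sSup (Set.mem_image_of_mem e hb)⟩)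

section Bsq

variable {C D : Type*} [CompleteLattice C] [CompleteLattice D] {f : C → D}

theorem CJPrime.le_bsq {j : C} (hj : CJPrime j) {v : D} (h : f j ≤ v) : j ≤ bsq f v :=
  le_sSup ⟨hj, h⟩

theorem bsq_mono (f : C → D) : Monotone (bsq f) :=
  fun _ _ hvw => sSup_le_sSup fun _ hj => ⟨hj.1, hj.2.trans hvw⟩

theorem le_bsq_of_map_le (hC : JoinPerfect C) (hf : Monotone f) {u : C} {v : D}
    (h : f u ≤ v) : u ≤ bsq f v :=
  (hC u).trans_le (sSup_le fun _ hj => hj.1.le_bsq ((hf hj.2).trans h))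

end Bsq

section Esakia

variable {A B C D : Type*} [DistribLattice A] [BoundedOrder A] [DistribLattice B]
  [BoundedOrder B] [CompleteLattice C] [CompleteLattice D] {eA : A → C} {eB : B → D} {f : C → D}

theorem exists_le_map_le_finset_sup_of_map_le_sSup (hceA : IsCanonicalExtension eA)
    (hceB : IsCanonicalExtension eB) (hf : Monotone f) (hfcE : ClosedEsakia eA f)
    (hcl : ∀ a : A, ClosedElem eB (f (eA a))) {j : C} (hj : ClosedElem eA j) {V : Set B}
    (hjV : f j ≤ sSup (eB '' V)) :
    ∃ a, j ≤ eA a ∧ ∃ G : Finset B, ↑G ⊆ V ∧ f (eA a) ≤ G.sup eB := by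
  set P := {a | j ≤ eA a}
  choose T hT using hcl
  have hfj : f j = sInf (f '' (eA '' P)) := by
    conv_lhs => rw [← hj.sInf_image_setOf_le]
    exact hfcE _ (hceA.downDir_image_setOf_le j) (by rintro _ ⟨a, -, rfl⟩; exact ⟨{a}, by simp⟩)
  have hTj : sInf (eB '' ⋃ a ∈ P, T a) ≤ f j := by
    rw [hfj]
    refine le_sInf ?_
    rintro _ ⟨_, ⟨a, ha, rfl⟩, rfl⟩
    rw [hT a]
    exact sInf_le_sInf (Set.image_mono (Set.subset_biUnion_of_mem ha))
  obtain ⟨F, hFT, G, hGV, hFG⟩ := hceB.compact _ V (hTj.trans hjV)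
  have hF : ∀ b ∈ F, ∃ d ∈ f '' (eA '' P), d ≤ eB b := by
    intro b hb
    obtain ⟨a, ha, hbT⟩ := Set.mem_iUnion₂.1 (hFT hb)
    exact ⟨f (eA a), ⟨_, ⟨a, ha, rfl⟩, rfl⟩, (hT a).le.trans (sInf_le ⟨b, hbT, rfl⟩)⟩
  obtain ⟨_, ⟨_, ⟨a, ha, rfl⟩, rfl⟩, haF⟩ :=
    ((hceA.downDir_image_setOf_le j).image hf).exists_forall_le F hF
  refine ⟨a, ha, G, hGV, ?_⟩
  calc f (eA a) ≤ F.inf eB := Finset.le_inf haF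
    _ = eB (F.inf id) := (hceB.map_finset_inf F id).symm
    _ ≤ eB (G.sup id) := hceB.monotone hFG
    _ = G.sup eB := hceB.map_finset_sup G id

theorem openElem_bsq (hceA : IsCanonicalExtension eA) (hceB : IsCanonicalExtension eB)
    (hCj : JoinPerfect C) (hf : Monotone f) (hfcE : ClosedEsakia eA f)
    (hcl : ∀ a : A, ClosedElem eB (f (eA a))) {o : D} (ho : OpenElem eB o) :
    OpenElem eA (bsq f o) := by
  refine ⟨{a | f (eA a) ≤ o}, le_antisymm (sSup_le ?_) (sSup_le ?_)⟩
  · rintro j ⟨hj, hjo⟩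
    obtain ⟨U, rfl⟩ := ho
    obtain ⟨a, hja, G, hGU, haG⟩ := exists_le_map_le_finset_sup_of_map_le_sSup hceA hceB hf hfcE
      hcl (hceA.closedElem_of_cjPrime hj) hjo
    have hGo : G.sup eB ≤ sSup (eB '' U) :=
      Finset.sup_le fun b hb => le_sSup (Set.mem_image_of_mem eB (hGU hb))
    exact hja.trans (le_sSup ⟨a, haG.trans hGo, rfl⟩)
  · rintro _ ⟨a, ha, rfl⟩
    exact le_bsq_of_map_le hCj hf ha

theorem bsq_sSup_of_upDir (hceA : IsCanonicalExtension eA) (hceB : IsCanonicalExtension eB)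
    (hf : Monotone f) (hfcE : ClosedEsakia eA f) (hcl : ∀ a : A, ClosedElem eB (f (eA a)))
    {𝒪 : Set D} (h𝒪dir : UpDir 𝒪) (h𝒪op : ∀ o ∈ 𝒪, OpenElem eB o) :
    bsq f (sSup 𝒪) = sSup (bsq f '' 𝒪) := by
  refine le_antisymm (sSup_le ?_) (sSup_le ?_)
  · rintro j ⟨hj, hj𝒪⟩
    obtain ⟨a, hja, G, hGV, haG⟩ := exists_le_map_le_finset_sup_of_map_le_sSup hceA hceB hf hfcE
      hcl (hceA.closedElem_of_cjPrime hj) (hj𝒪.trans (sSup_le_sSup_image_setOf_le h𝒪op))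
    obtain ⟨o, ho, hGo⟩ := h𝒪dir.exists_forall_le G fun b hb => hGV hb
    have hfjo : f j ≤ o := (hf hja).trans (haG.trans (Finset.sup_le hGo))
    exact (hj.le_bsq hfjo).trans (le_sSup (Set.mem_image_of_mem _ ho))
  · rintro _ ⟨o, ho, rfl⟩
    exact bsq_mono f (le_sSup ho)

end Esakia

theorem stmt13_general {A B C D : Type*} [DistribLattice A] [BoundedOrder A]
    [DistribLattice B] [BoundedOrder B] [CompleteLattice C] [CompleteLattice D]
    (eA : A → C) (eB : B → D)
    (hceA : IsCanonicalExtension eA) (hceB : IsCanonicalExtension eB)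
    (hCj : JoinPerfect C)
    (f : C → D) (hf : Monotone f)
    (hfcE : ClosedEsakia eA f)
    (hcl : ∀ a : A, ClosedElem eB (f (eA a)))
    (𝒪 : Set D) (h𝒪dir : UpDir 𝒪) (h𝒪op : ∀ o ∈ 𝒪, OpenElem eB o) :
    bsq f (sSup 𝒪) = sSup (bsq f '' 𝒪) ∧
    ∃ 𝒪' ⊆ 𝒪, UpDir 𝒪' ∧ sSup 𝒪' = sSup 𝒪 ∧
      (∀ o ∈ 𝒪', OpenElem eA (bsq f o)) ∧
      sSup (bsq f '' 𝒪') = sSup (bsq f '' 𝒪) :=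
  ⟨bsq_sSup_of_upDir hceA hceB hf hfcE hcl h𝒪dir h𝒪op, 𝒪, subset_rfl, h𝒪dir, rfl,
    fun _ ho => openElem_bsq hceA hceB hCj hf hfcE hcl (h𝒪op _ ho), rfl⟩

/-- Proposition 4.11(1), conditional Esakia lemma (first half). -/
theorem stmt13 {A B C D : Type*} [DistribLattice A] [BoundedOrder A]
    [DistribLattice B] [BoundedOrder B] [CompleteLattice C] [CompleteLattice D]
    (eA : A → C) (eB : B → D)
    (hceA : IsCanonicalExtension eA) (hceB : IsCanonicalExtension eB)
    (hCj : JoinPerfect C) (hCm : MeetPerfect C)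
    (hDj : JoinPerfect D) (hDm : MeetPerfect D)
    (f : C → D) (hf : Monotone f)
    (hfcE : ClosedEsakia eA f) (hfoE : OpenEsakia eA f)
    (hcl : ∀ a : A, ClosedElem eB (f (eA a)))
    (hadd : ∀ a b : A, f (eA (a ⊔ b)) ≤ f (eA a) ⊔ f (eA b))
    (𝒪 : Set D) (h𝒪dir : UpDir 𝒪) (h𝒪op : ∀ o ∈ 𝒪, OpenElem eB o)
    (hbot : f ⊥ ≤ sSup 𝒪) :
    bsq f (sSup 𝒪) = sSup (bsq f '' 𝒪) ∧
    ∃ 𝒪' ⊆ 𝒪, UpDir 𝒪' ∧ sSup 𝒪' = sSup 𝒪 ∧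
      (∀ o ∈ 𝒪', OpenElem eA (bsq f o)) ∧
      sSup (bsq f '' 𝒪') = sSup (bsq f '' 𝒪) :=
  stmt13_general eA eB hceA hceB hCj f hf hfcE hcl 𝒪 h𝒪dir h𝒪op
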